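/- In the algebra E(m,λ), the derived relation α₁α₂α₅α₆α₁α₂ = α₁α₂α₅α₆α₃α₄ holds. -/
import Mathlib


/-!
The algebra `E(m,λ)` of Skowyrski's "Two tilts of higher spherical algebras",
realized as the quotient of the path algebra of the quiver `Q_E` by the
relations (E1)-(E8).  Vertices `1,…,6` are encoded as `0,…,5 : Fin 6`.
The path algebra is presented as the free algebra on the trivial paths
(idempotents) and the arrows, modulo the path-algebra relations
(orthogonal idempotents summing to `1`, source/target compatibility)
and the relations (E1)-(E8).  Paths compose left to right.
-/

namespace TwoTiltsE

/-- Arrows of `Q_E`: α₁:1→2, α₂:2→3, α₃:1→6, α₄:6→3, α₅:3→4, α₆:4→1,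
β₁:1→5, β₂:5→3, γ₀:3→1. -/
inductive EArr | a1 | a2 | a3 | a4 | a5 | a6 | b1 | b2 | g0

/-- Source vertex of an arrow. -/
def EArr.src : EArr → Fin 6
  | .a1 => 0 | .a2 => 1 | .a3 => 0 | .a4 => 5 | .a5 => 2
  | .a6 => 3 | .b1 => 0 | .b2 => 4 | .g0 => 2

/-- Target vertex of an arrow. -/
def EArr.tgt : EArr → Fin 6
  | .a1 => 1 | .a2 => 2 | .a3 => 5 | .a4 => 2 | .a5 => 3
  | .a6 => 0 | .b1 => 4 | .b2 => 2 | .g0 => 0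

/-- `EPath c i j` : the list of arrows `c` is a path from vertex `i` to
vertex `j` in `Q_E` (consecutive arrows composable, left to right). -/
def EPath : List EArr → Fin 6 → Fin 6 → Prop
  | [], i, j => i = j
  | a :: c, i, j => a.src = i ∧ EPath c a.tgt j

/-- The free algebra on trivial paths and arrows of `Q_E`. -/
abbrev EFree (K : Type*) [Field K] := FreeAlgebra K (Fin 6 ⊕ EArr)

variable {K : Type*} [Field K]

/-- Trivial path at vertex `i`. -/
def fe (i : Fin 6) : EFree K := FreeAlgebra.ι K (Sum.inl i)
/-- The arrow `a` as an element of the free algebra. -/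
def fa (a : EArr) : EFree K := FreeAlgebra.ι K (Sum.inr a)
/-- The product of a list of arrows in the free algebra. -/
def pathProd (c : List EArr) : EFree K := (c.map fa).prod

def A1 : EFree K := fa .a1
def A2 : EFree K := fa .a2
def A3 : EFree K := fa .a3
def A4 : EFree K := fa .a4
def A5 : EFree K := fa .a5
def A6 : EFree K := fa .a6
def B1 : EFree K := fa .b1
def B2 : EFree K := fa .b2
def G0 : EFree K := fa .g0

/-- The defining relations of `E(m,λ)`: path algebra relations together
with (E1)-(E8). -/
inductive ERel (K : Type*) [Field K] (m : ℕ) (l : K) : EFree K → EFree K → Prop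
  | orth (i j : Fin 6) : ERel K m l (fe i * fe j) (if i = j then fe i else 0)
  | total : ERel K m l (∑ i, fe i) 1
  | src (a : EArr) : ERel K m l (fe a.src * fa a) (fa a)
  | tgt (a : EArr) : ERel K m l (fa a * fe a.tgt) (fa a)
  | E1 : ERel K m l (A1 * A2 - A3 * A4 + B1 * B2) 0
  | E2 : ERel K m l (A3 * A4 * A5)
      (A1 * A2 * A5 + l • ((A1 * A2 * A5 * A6) ^ (m - 1) * (A1 * A2 * A5)))
  | E3a : ERel K m l (G0 * B1) 0
  | E3b : ERel K m l (G0 * A3) (A5 * A6 * A3)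
  | E3c : ERel K m l (G0 * A1)
      (A5 * A6 * A1 + l • ((A5 * A6 * A1 * A2) ^ (m - 1) * (A5 * A6 * A1)))
  | E4a : ERel K m l (A2 * G0)
      (A2 * A5 * A6 + l • ((A2 * A5 * A6 * A1) ^ (m - 1) * (A2 * A5 * A6)))
  | E4b : ERel K m l ((A2 * A5 * A6 * A1) ^ (m - 1) * (A2 * A5 * A6 * A3)) 0
  | E5a : ERel K m l (A4 * G0) (A4 * A5 * A6)
  | E5b : ERel K m l (A4 * A5 * A6 * A1 * (A2 * A5 * A6 * A1) ^ (m - 1)) 0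
  | E6 : ERel K m l (A6 * A3 * A4)
      (A6 * A1 * A2 + l • ((A6 * A1 * A2 * A5) ^ (m - 1) * (A6 * A1 * A2)))
  | E7a : ERel K m l (B2 * G0) 0
  | E7b : ERel K m l (B2 * A5 * A6 * A1) 0
  | E7c : ERel K m l (B2 * A5 * A6 * A3) 0
  | E7d : ERel K m l (B2 * A5 * A6 * B1 * B2) 0
  | E8l (i : Fin 6) (c : List EArr) (hc : EPath c i i)
      (hlen : c.length = 3 ∨ c.length = 4) (θ : EArr) (hθ : θ.tgt = i) :
      ERel K m l (fa θ * (pathProd c) ^ m) 0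
  | E8r (i : Fin 6) (c : List EArr) (hc : EPath c i i)
      (hlen : c.length = 3 ∨ c.length = 4) (φ : EArr) (hφ : φ.src = i) :
      ERel K m l ((pathProd c) ^ m * fa φ) 0

/-- The algebra `E(m,λ)`. -/
abbrev EAlg (K : Type*) [Field K] (m : ℕ) (l : K) := RingQuot (ERel K m l)

/-- The canonical projection onto `E(m,λ)`. -/
noncomputable def eq' (K : Type*) [Field K] (m : ℕ) (l : K) :
    EFree K →ₐ[K] EAlg K m l := RingQuot.mkAlgHom K (ERel K m l)

end TwoTiltsE

open TwoTiltsE in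
/-- In the algebra `E(m,λ)`, the derived relation
`α₁α₂α₅α₆α₁α₂ = α₁α₂α₅α₆α₃α₄` holds. -/
theorem E_derived_rel_two (K : Type*) [Field K] (m : ℕ) (hm : 2 ≤ m)
    (l : K) (hl : l ≠ 0) :
    eq' K m l (A1 * A2 * A5 * A6 * A1 * A2) =
      eq' K m l (A1 * A2 * A5 * A6 * A3 * A4) := by
  have hm1 : m - 1 + 1 = m := Nat.succ_pred_eq_of_pos (show 0 < m by omega)
  have aux : ∀ (x y : EFree K) (n : ℕ), x * ((y * x) ^ n * y) = (x * y) ^ (n + 1) := by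
    intro x y n
    induction n with
    | zero => simp [pow_succ]
    | succ n ih =>
        rw [pow_succ', pow_succ']
        calc x * ((y * x) * (y * x) ^ n * y) = (x * y) * (x * ((y * x) ^ n * y)) := by
              simp [mul_assoc]
          _ = (x * y) * (x * y) ^ (n + 1) := by rw [ih]
  have key : ∀ {x y : EFree K}, ERel K m l x y → eq' K m l x = eq' K m l y := by
    intro x y h
    exact RingQuot.mkAlgHom_rel K h
  have hpath : EPath [.a5, .a6, .a1, .a2] 2 2 := ⟨rfl, rfl, rfl, rfl, rfl⟩
  have hC : (pathProd [.a5, .a6, .a1, .a2] : EFree K) = A5 * (A6 * (A1 * A2)) := by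
    simp [pathProd, A1, A2, A5, A6, mul_assoc]
  have h8 : eq' K m l (fa .a2 * (pathProd [.a5, .a6, .a1, .a2]) ^ m) = 0 := by
    have := key (ERel.E8l (K := K) (m := m) (l := l) 2 [.a5, .a6, .a1, .a2] hpath
      (Or.inr rfl) .a2 rfl)
    simpa using this
  have h6 := key (ERel.E6 (K := K) (m := m) (l := l))
  have hfree : (A1 * A2 * A5 * ((A6 * A1 * A2 * A5) ^ (m - 1) * (A6 * A1 * A2)) : EFree K)
      = A1 * (fa .a2 * (pathProd [.a5, .a6, .a1, .a2]) ^ m) := by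
    rw [hC]
    have hA2 : (fa .a2 : EFree K) = A2 := rfl
    rw [hA2, ← hm1, ← aux (A5 : EFree K) (A6 * (A1 * A2)) (m - 1)]
    simp [mul_assoc]
  have hzero : eq' K m l (A1 * A2 * A5 * ((A6 * A1 * A2 * A5) ^ (m - 1) * (A6 * A1 * A2))) = 0 := by
    rw [hfree, map_mul, h8, mul_zero]
  have e1 : (A1 * A2 * A5 * A6 * A3 * A4 : EFree K) = (A1 * A2 * A5) * (A6 * A3 * A4) := by
    simp [mul_assoc]
  have e2 : (A1 * A2 * A5 * A6 * A1 * A2 : EFree K) = (A1 * A2 * A5) * (A6 * A1 * A2) := by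
    simp [mul_assoc]
  rw [e1, e2, map_mul (eq' K m l) (A1 * A2 * A5) (A6 * A3 * A4),
    map_mul (eq' K m l) (A1 * A2 * A5) (A6 * A1 * A2), h6, map_add, map_smul, mul_add,
    mul_smul_comm, ← map_mul, ← map_mul, hzero, smul_zero, add_zero]
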